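/- Let ω : ℝⁿ → (ℝⁿ × ℝⁿ → ℝ) be a smooth family of alternating bilinear forms such that ω_p is nondegenerate for every p ∈ ℝⁿ. Then for every loop γ ∈ C^∞(S¹, ℝⁿ), the form Ω^ω_γ(X, Y) = ∫₀¹ ω_{γ(t)}(X(t), Y(t)) dt on C^∞(S¹, ℝⁿ) is weakly nondegenerate: if X ∈ C^∞(S¹, ℝⁿ) satisfies Ω^ω_γ(X, Y) = 0 for all Y ∈ C^∞(S¹, ℝⁿ), then X = 0. -/
import Mathlib


/-- Smooth 1-periodic map ℝ → ℝⁿ, modelling a smooth loop S¹ = ℝ/ℤ → ℝⁿ. -/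
def SmoothLoop (n : ℕ) (γ : ℝ → Fin n → ℝ) : Prop :=
  ContDiff ℝ (⊤ : ℕ∞) γ ∧ Function.Periodic γ 1

theorem stmt_2 {n : ℕ}
    (ω : (Fin n → ℝ) → (Fin n → ℝ) →L[ℝ] (Fin n → ℝ) →L[ℝ] ℝ)
    (hω : ContDiff ℝ (⊤ : ℕ∞) ω)
    (halt : ∀ p v, ω p v v = 0)
    (hnd : ∀ p v, (∀ w, ω p v w = 0) → v = 0)
    (γ : ℝ → Fin n → ℝ) (hγ : SmoothLoop n γ)
    (X : ℝ → Fin n → ℝ) (hX : SmoothLoop n X)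
    (h : ∀ Y : ℝ → Fin n → ℝ, SmoothLoop n Y →
      (∫ t in (0:ℝ)..1, ω (γ t) (X t) (Y t)) = 0) :
    X = 0 := by
  classical
  -- basis vectors
  set e : Fin n → Fin n → ℝ := fun i => fun j => if i = j then 1 else 0 with he
  -- the test loop
  set Y : ℝ → Fin n → ℝ := fun t i => ω (γ t) (X t) (e i) with hYdef
  have hφ : ContDiff ℝ (⊤ : ℕ∞) (fun t => ω (γ t) (X t)) :=
    (hω.comp hγ.1).clm_apply hX.1
  have hYsmooth : ContDiff ℝ (⊤ : ℕ∞) Y := by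
    rw [contDiff_pi]
    intro i
    exact hφ.clm_apply contDiff_const
  have hYper : Function.Periodic Y 1 := by
    intro t
    funext i
    simp only [hYdef, hγ.2 t, hX.2 t]
  have hY : SmoothLoop n Y := ⟨hYsmooth, hYper⟩
  -- the nonnegative integrand
  set g : ℝ → ℝ := fun t => ∑ i, (ω (γ t) (X t) (e i)) ^ 2 with hgdef
  have hgeq : ∀ t, ω (γ t) (X t) (Y t) = g t := by
    intro t
    have := (ω (γ t) (X t)).toLinearMap.pi_apply_eq_sum_univ (Y t)
    simp only [ContinuousLinearMap.coe_coe] at this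
    rw [this]
    refine Finset.sum_congr rfl (fun i _ => ?_)
    simp [hYdef, he, smul_eq_mul, sq]
  have hgcont : Continuous g := by
    apply continuous_finset_sum
    intro i _
    exact ((hφ.clm_apply contDiff_const).continuous).pow 2
  have hgnonneg : ∀ t, 0 ≤ g t := fun t => Finset.sum_nonneg fun i _ => sq_nonneg _
  have hint : (∫ t in (0:ℝ)..1, g t) = 0 := by
    rw [show (∫ t in (0:ℝ)..1, g t) = ∫ t in (0:ℝ)..1, ω (γ t) (X t) (Y t) from
      intervalIntegral.integral_congr fun t _ => (hgeq t).symm]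
    exact h Y hY
  -- conclude g = 0 on Ioc 0 1
  have hgi : IntervalIntegrable g MeasureTheory.volume 0 1 :=
    hgcont.intervalIntegrable 0 1
  have hae : g =ᵐ[MeasureTheory.volume.restrict (Set.Ioc (0:ℝ) 1)] 0 := by
    rw [← intervalIntegral.integral_eq_zero_iff_of_le_of_nonneg_ae (by norm_num)
      (Filter.Eventually.of_forall fun t => hgnonneg t) hgi]
    exact hint
  have hg0 : Set.EqOn g 0 (Set.Ioc (0:ℝ) 1) :=
    MeasureTheory.volume.eqOn_Ioc_of_ae_eq hae hgcont.continuousOn continuousOn_const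
  -- X vanishes on Ioc 0 1
  have hX0 : ∀ t ∈ Set.Ioc (0:ℝ) 1, X t = 0 := by
    intro t ht
    have hgt : g t = 0 := hg0 ht
    have hterm : ∀ i ∈ Finset.univ, (ω (γ t) (X t) (e i)) ^ 2 = 0 := by
      rw [← Finset.sum_eq_zero_iff_of_nonneg (fun i _ => sq_nonneg _)]
      exact hgt
    have hei : ∀ i, ω (γ t) (X t) (e i) = 0 := fun i =>
      sq_eq_zero_iff.mp (hterm i (Finset.mem_univ i))
    apply hnd (γ t)
    intro w
    have := (ω (γ t) (X t)).toLinearMap.pi_apply_eq_sum_univ w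
    simp only [ContinuousLinearMap.coe_coe] at this
    rw [this]
    apply Finset.sum_eq_zero
    intro i _
    rw [show (fun j => if i = j then (1:ℝ) else 0) = e i from rfl, hei i, smul_zero]
  -- extend by periodicity
  funext t
  have hfrac : t - ((⌈t⌉ : ℤ) - 1 : ℤ) ∈ Set.Ioc (0:ℝ) 1 := by
    constructor
    · push_cast
      have := Int.ceil_lt_add_one t
      linarith
    · push_cast
      have := Int.le_ceil t
      linarith
  have hper : X (t - ((⌈t⌉ : ℤ) - 1 : ℤ) * 1) = X t := hX.2.sub_int_mul_eq _
  rw [mul_one] at hper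
  rw [← hper] at *
  exact (hX0 _ hfrac).trans rfl
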